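/- For every zone Z and bound function α : X → ℕ, letting L = U = α: Extra⁺_{LU}(Z) ⊆ Closure_α(Z). -/

import Mathlib

attribute [local instance] Classical.propDecidable

noncomputable section

namespace TAform

/-! ### Weights `(≼, c)` with `c ∈ ℤ ∪ {∞}` -/

/-- Values in `ℤ ∪ {∞}`: `none` represents `∞`. -/
abbrev OVal := Option ℤ

/-- Addition on `ℤ ∪ {∞}`. -/
def ovAdd : OVal → OVal → OVal
  | some a, some b => some (a + b)
  | _, _ => none

/-- Strict order on `ℤ ∪ {∞}`. -/
def ovLt : OVal → OVal → Prop
  | some a, some b => a < b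
  | some _, none => True
  | none, _ => False

/-- A weight `(≼, c)`: `strict = true` means `≼` is `<`, `strict = false` means `≤`;
`val ∈ ℤ ∪ {∞}`. -/
structure Weight where
  strict : Bool
  val : OVal

/-- The weight `(<, ∞)`. -/
def winf : Weight := ⟨true, none⟩

/-- The weight `(≤, c)`. -/
def wle (c : ℤ) : Weight := ⟨false, some c⟩

/-- The weight `(<, c)`. -/
def wlt (c : ℤ) : Weight := ⟨true, some c⟩

/-- Addition: `(≼₁,c₁)+(≼₂,c₂) = (≼,c₁+c₂)` where `≼` is `<` iff `≼₁` or `≼₂` is `<`. -/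
def Weight.add (a b : Weight) : Weight := ⟨a.strict || b.strict, ovAdd a.val b.val⟩

/-- Order: `(≼₁,c₁) < (≼₂,c₂)` iff `c₁ < c₂`, or `c₁ = c₂`, `≼₁` is `<` and `≼₂` is `≤`. -/
def Weight.lt (a b : Weight) : Prop :=
  ovLt a.val b.val ∨ (a.val = b.val ∧ a.strict = true ∧ b.strict = false)

def Weight.le (a b : Weight) : Prop := Weight.lt a b ∨ a = b

/-- Minus: `−(≼,c) = (≼,−c)`. -/
def Weight.neg (w : Weight) : Weight := ⟨w.strict, Option.map (fun c => -c) w.val⟩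

/-- Floor: `⌊(<,c)⌋ = (≤,c−1)` and `⌊(≤,c)⌋ = (≤,c)`. -/
def Weight.floor (w : Weight) : Weight :=
  ⟨false, if w.strict then Option.map (fun c => c - 1) w.val else w.val⟩

/-- Ceiling (on integer-valued weights): `⌈(≤,c)⌉ = (≤,c)` and `⌈(<,c)⌉ = (<,c+1)`. -/
def Weight.ceil (w : Weight) : Weight :=
  if w.strict then ⟨true, Option.map (fun c => c + 1) w.val⟩ else w

/-- Maximum of two weights. -/
def Weight.max (a b : Weight) : Weight := if Weight.lt a b then b else a

/-- Satisfaction: `d ≼ c` for a real number `d` and a weight `(≼,c)`. -/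
def Weight.sat (w : Weight) (d : ℝ) : Prop :=
  match w.val with
  | none => True
  | some c => if w.strict then d < (c : ℝ) else d ≤ (c : ℝ)

/-! ### Distance graphs and their semantics -/

/-- Vertices: clocks of `X` together with the special vertex `x₀` (represented by `none`). -/
abbrev Vtx (X : Type*) := Option X

/-- A distance graph: a weight for every ordered pair of vertices.  The edge
`a →^{≼ c} b` represents the constraint `v b − v a ≼ c`. -/
abbrev DGraph (X : Type*) := Vtx X → Vtx X → Weight

/-- A clock valuation. -/
abbrev Val (X : Type*) := X → ℝ

/-- The valuation is nonnegative (clock valuations map into `ℝ≥0`). -/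
def Nonneg {X : Type*} (v : Val X) : Prop := ∀ x, 0 ≤ v x

/-- Extension of a valuation to all vertices, sending `x₀` to `0`. -/
def extV {X : Type*} (v : Val X) : Vtx X → ℝ
  | none => 0
  | some x => v x

/-- Semantics of a distance graph: the set of nonnegative clock valuations
(with `x₀ = 0`) satisfying all edge constraints. -/
def sem {X : Type*} (G : DGraph X) : Set (Val X) :=
  { v | Nonneg v ∧ ∀ a b, (G a b).sat (extV v b - extV v a) }

/-- Weight of the path `a :: l ++ [b]` in `G` (sum of the weights of its edges). -/
def pathWeight {X : Type*} (G : DGraph X) : Vtx X → List (Vtx X) → Vtx X → Weight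
  | a, [], b => G a b
  | a, c :: l, b => (G a c).add (pathWeight G c l b)

/-- `G` has only positive cycles: no cycle has weight at most `(<,0)`. -/
def OnlyPositiveCycles {X : Type*} (G : DGraph X) : Prop :=
  ∀ (a : Vtx X) (l : List (Vtx X)), ¬ (pathWeight G a l a).le (wlt 0)

/-- Canonical form: the weight of the edge from `a` to `b` is a lower bound of the
weights of all paths from `a` to `b`. -/
def PathCanonical {X : Type*} (G : DGraph X) : Prop :=
  ∀ (a b : Vtx X) (l : List (Vtx X)), (G a b).le (pathWeight G a l b)

/-- The weight `w` bounds the difference `v b − v a` over all `v ∈ S`. -/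
def Bounds {X : Type*} (S : Set (Val X)) (a b : Vtx X) (w : Weight) : Prop :=
  ∀ v ∈ S, w.sat (extV v b - extV v a)

/-- `G` is the canonical distance graph of the set `S`: it represents `S` and each of
its edge weights is the least weight bounding the corresponding difference over `S`
(equivalently, for sets defined by clock constraints, the lower bound of the weights
of paths between its endpoints). -/
def IsCanonGraph {X : Type*} (G : DGraph X) (S : Set (Val X)) : Prop :=
  sem G = S ∧ ∀ a b w, Bounds S a b w → (G a b).le w

/-- A zone: a set of valuations defined by a conjunction of constraints of the form
`x − y # c` or `x # c`, i.e. the set represented by some distance graph. -/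
def IsZone {X : Type*} (Z : Set (Val X)) : Prop := ∃ G : DGraph X, sem G = Z

/-! ### Regions and closure -/

/-- Region equivalence with respect to the bound function `α`: same integer parts
(or both above the bound), same set of clocks with zero fractional part, and the
same ordering of fractional parts of bounded clocks. -/
def regEq {X : Type*} (α : X → ℕ) (v w : Val X) : Prop :=
  (∀ x, ((α x : ℝ) < v x ∧ (α x : ℝ) < w x) ∨
    (⌊v x⌋ = ⌊w x⌋ ∧ (Int.fract (v x) = 0 ↔ Int.fract (w x) = 0))) ∧
  (∀ x y, v x ≤ (α x : ℝ) → v y ≤ (α y : ℝ) →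
    (Int.fract (v x) ≤ Int.fract (v y) ↔ Int.fract (w x) ≤ Int.fract (w y)))

/-- A region with respect to `α`: an equivalence class of region equivalence
(inside the nonnegative valuations). -/
def IsRegion {X : Type*} (α : X → ℕ) (R : Set (Val X)) : Prop :=
  ∃ v : Val X, Nonneg v ∧ R = { w | Nonneg w ∧ regEq α v w }

/-- Closure abstraction: the union of the regions (w.r.t. `α`) intersecting `S`. -/
def Closure {X : Type*} (α : X → ℕ) (S : Set (Val X)) : Set (Val X) :=
  ⋃₀ { R | IsRegion α R ∧ (R ∩ S).Nonempty }

/-! ### LU-bounds and the `Extra⁺_LU` extrapolation -/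

/-- `w > (≤, l)` where `l ∈ ℕ ∪ {−∞}` (`⊥` is `−∞`). -/
def gtLB (w : Weight) (l : WithBot ℕ) : Prop :=
  ∀ n : ℕ, l = (n : WithBot ℕ) → ovLt (some (n : ℤ)) w.val

/-- `−w > (≤, l)` where `l ∈ ℕ ∪ {−∞}`. -/
def negGtLB (w : Weight) (l : WithBot ℕ) : Prop :=
  ∃ c : ℤ, w.val = some c ∧ ∀ n : ℕ, l = (n : WithBot ℕ) → c < -(n : ℤ)

/-- The weight `(<, −u)` for `u ∈ ℕ ∪ {−∞}` (with `(<,∞)` when `u = −∞`). -/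
def wltNeg (u : WithBot ℕ) : Weight :=
  ⟨true, WithBot.recBotCoe none (fun n => some (-(n : ℤ))) u⟩

/-- The `Extra⁺_{LU}` extrapolation, applied edgewise to a distance graph `G`
(the canonical graph of a zone): `Z⁺_{xy} = (<,∞)` if `Z_{xy} > (≤,L_y)`, or
`−Z_{y0} > (≤,L_y)`, or `−Z_{x0} > (≤,U_x)` and `y ≠ x₀`;
`Z⁺_{x0} = (<,−U_x)` if `−Z_{x0} > (≤,U_x)`; and `Z⁺_{xy} = Z_{xy}` otherwise. -/
def extraLU {X : Type*} (L U : X → WithBot ℕ) (G : DGraph X) : DGraph X := fun a b =>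
  match a, b with
  | some x, some y =>
      if gtLB (G (some x) (some y)) (L y) ∨ negGtLB (G (some y) none) (L y) ∨
          negGtLB (G (some x) none) (U x)
      then winf else G (some x) (some y)
  | none, some y =>
      if gtLB (G none (some y)) (L y) ∨ negGtLB (G (some y) none) (L y)
      then winf else G none (some y)
  | some x, none =>
      if negGtLB (G (some x) none) (U x) then wltNeg (U x) else G (some x) none
  | none, none => G none none

/-! ### LU-preorder and its abstraction -/

/-- `l < r` where `l ∈ ℕ ∪ {−∞}` and `r : ℝ`. -/
def lbLtR (l : WithBot ℕ) (r : ℝ) : Prop := ∀ n : ℕ, l = (n : WithBot ℕ) → (n : ℝ) < r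

/-- The LU-preorder `ν' ≼_{LU} ν`: for each clock `x`, either `ν' x = ν x`,
or `L x < ν' x < ν x`, or `U x < ν x < ν' x`. -/
def LUpre {X : Type*} (L U : X → WithBot ℕ) (ν' ν : Val X) : Prop :=
  ∀ x, ν' x = ν x ∨ (lbLtR (L x) (ν' x) ∧ ν' x < ν x) ∨ (lbLtR (U x) (ν x) ∧ ν x < ν' x)

/-- The abstraction `a_{≼LU}(W) = { ν | ∃ ν' ∈ W, ν' ≼_{LU} ν }` (inside the
nonnegative valuations). -/
def aLU {X : Type*} (L U : X → WithBot ℕ) (W : Set (Val X)) : Set (Val X) :=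
  { ν | Nonneg ν ∧ ∃ ν' ∈ W, LUpre L U ν' ν }

/-! ### Guards, transitions, timed automata -/

/-- Comparison operators `# ∈ {<, ≤, =, ≥, >}`. -/
inductive Cmp | lt | le | eq | ge | gt
deriving DecidableEq

/-- Satisfaction of a comparison by real numbers. -/
def Cmp.sat : Cmp → ℝ → ℝ → Prop
  | .lt, a, b => a < b
  | .le, a, b => a ≤ b
  | .eq, a, b => a = b
  | .ge, a, b => a ≥ b
  | .gt, a, b => a > b

/-- A clock constraint (guard): a conjunction (list) of constraints `x # c`, `c ∈ ℕ`. -/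
abbrev Guard (X : Type*) := List (X × Cmp × ℕ)

/-- `v ⊨ g`: every conjunct of the guard holds. -/
def gsat {X : Type*} (v : Val X) (g : Guard X) : Prop :=
  ∀ p ∈ g, Cmp.sat p.2.1 (v p.1) (p.2.2 : ℝ)

/-- `[R]v`: reset the clocks in `R` to `0`, leaving the others unchanged. -/
def resetVal {X : Type*} (R : Set X) (v : Val X) : Val X := Set.indicator Rᶜ v

/-- One step `ν →^{δ,t} ν'` for a transition with guard `g` and reset set `R`:
`ν + δ ⊨ g` and `ν' = [R](ν + δ)`. -/
def step {X : Type*} (g : Guard X) (R : Set X) (δ : ℝ) (ν ν' : Val X) : Prop :=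
  0 ≤ δ ∧ gsat (fun x => ν x + δ) g ∧ ν' = resetVal R (fun x => ν x + δ)

/-- `Post(S,t)`: all valuations reachable by the transition from valuations in `S`. -/
def Post {X : Type*} (g : Guard X) (R : Set X) (S : Set (Val X)) : Set (Val X) :=
  { ν' | ∃ ν ∈ S, ∃ δ : ℝ, step g R δ ν ν' }

/-- A timed automaton `(Q, q₀, X, T, Acc)`. -/
structure TimedAuto (Q X : Type*) where
  init : Q
  trans : Set (Q × Guard X × Set X × Q)
  acc : Set Q

/-- `(q,ν) →^{δ,t} (q',ν')` for a transition `t = (q,g,R,q')` of the automaton. -/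
def TimedAuto.cstep {Q X : Type*} (A : TimedAuto Q X) (t : Q × Guard X × Set X × Q)
    (δ : ℝ) (c c' : Q × Val X) : Prop :=
  t ∈ A.trans ∧ c.1 = t.1 ∧ c'.1 = t.2.2.2 ∧ step t.2.1 t.2.2.1 δ c.2 c'.2

/-!
A valuation `v ∈ Extra⁺_{LU}(Z)` is region-equivalent to every `u` that agrees with `v` on the
clocks with `v x ≤ α x` and exceeds `α` on the others, so it suffices to find such a `u` in `Z`.
The extrapolation keeps every constraint of `Z` between `x₀` and these bounded clocks, so `v`
satisfies them. The other clocks are assigned one at a time: the new value must lie between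
finitely many lower and upper bounds, which have a common point as soon as they meet pairwise.
They do, by the triangle inequality of the canonical graph and the invariant that every
unassigned clock `z` can still be placed above `α z`.
-/

section Order

variable {β : Type*} [LinearOrder β] {𝒰 𝒟 : Set (Set β)}

theorem exists_subset_sInter_of_isUpperSet (hfin : 𝒰.Finite) (hne : 𝒰.Nonempty)
    (hU : ∀ U ∈ 𝒰, IsUpperSet U) : ∃ U₀ ∈ 𝒰, U₀ ⊆ ⋂₀ 𝒰 := by
  obtain ⟨U₀, hU₀, hmax⟩ := Set.exists_max_image 𝒰 upperClosure hfin hne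
  refine ⟨U₀, hU₀, Set.subset_sInter fun U hU' => ?_⟩
  have := UpperSet.coe_subset_coe.2 (hmax U hU')
  rwa [(hU U hU').upperClosure, (hU U₀ hU₀).upperClosure] at this

theorem exists_subset_sInter_of_isLowerSet (hfin : 𝒟.Finite) (hne : 𝒟.Nonempty)
    (hD : ∀ D ∈ 𝒟, IsLowerSet D) : ∃ D₀ ∈ 𝒟, D₀ ⊆ ⋂₀ 𝒟 := by
  obtain ⟨D₀, hD₀, hmin⟩ := Set.exists_min_image 𝒟 lowerClosure hfin hne
  refine ⟨D₀, hD₀, Set.subset_sInter fun D hD' => ?_⟩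
  have := LowerSet.coe_subset_coe.2 (hmin D hD')
  rwa [(hD D hD').lowerClosure, (hD D₀ hD₀).lowerClosure] at this

theorem sInter_inter_sInter_nonempty (h𝒰 : 𝒰.Finite) (h𝒟 : 𝒟.Finite) (h𝒰₀ : 𝒰.Nonempty)
    (h𝒟₀ : 𝒟.Nonempty) (hU : ∀ U ∈ 𝒰, IsUpperSet U) (hD : ∀ D ∈ 𝒟, IsLowerSet D)
    (hmeet : ∀ U ∈ 𝒰, ∀ D ∈ 𝒟, (U ∩ D).Nonempty) : (⋂₀ 𝒰 ∩ ⋂₀ 𝒟).Nonempty := by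
  obtain ⟨U₀, hU₀, hU₀sub⟩ := exists_subset_sInter_of_isUpperSet h𝒰 h𝒰₀ hU
  obtain ⟨D₀, hD₀, hD₀sub⟩ := exists_subset_sInter_of_isLowerSet h𝒟 h𝒟₀ hD
  exact (hmeet U₀ hU₀ D₀ hD₀).mono (Set.inter_subset_inter hU₀sub hD₀sub)

end Order

namespace Weight

variable {w w' : Weight} {s t r r' : ℝ}

theorem sat.of_le (h : w.sat t) (hst : s ≤ t) : w.sat s := by
  rcases w with ⟨_ | _, _ | c⟩ <;> simp_all [sat] <;> linarith

theorem le_of_sat {c : ℤ} (hc : w.val = some c) (h : w.sat t) : t ≤ c := by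
  rcases w with ⟨_ | _, _ | c⟩ <;> simp_all [sat]
  linarith

@[simp] theorem sat_wlt {c : ℤ} : (wlt c).sat t ↔ t < c := by simp [wlt, sat]

theorem sat.mono (h : w.sat t) (hw : w.le w') : w'.sat t := by
  rcases w with ⟨_ | _, _ | c⟩ <;> rcases w' with ⟨_ | _, _ | c'⟩ <;>
    simp_all [le, lt, ovLt, sat]
  all_goals
    (try obtain hw | rfl := hw) <;> (try have := (Int.cast_lt (R := ℝ)).2 hw) <;> linarith

theorem sat_add (h : w.sat s) (h' : w'.sat t) : (w.add w').sat (s + t) := by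
  rcases w with ⟨_ | _, _ | c⟩ <;> rcases w' with ⟨_ | _, _ | c'⟩ <;>
    simp_all [add, ovAdd, sat] <;> linarith

theorem sat_add_iff : (w.add w').sat t ↔ ∃ s, w.sat s ∧ w'.sat (t - s) := by
  refine ⟨fun h => ?_, fun ⟨s, hs, hs'⟩ => by simpa using sat_add hs hs'⟩
  rcases w with ⟨b, _ | c⟩ <;> rcases w' with ⟨b', _ | c'⟩
  · exact ⟨0, by simp [sat], by simp [sat]⟩
  · refine ⟨t - c' + 1, by simp [sat], ?_⟩
    cases b' <;> simp [sat] <;> linarith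
  · refine ⟨c - 1, ?_, by simp [sat]⟩
    cases b <;> simp [sat]
  · refine ⟨(t + c - c') / 2, ?_, ?_⟩ <;> cases b <;> cases b' <;>
      simp [add, ovAdd, sat] at h ⊢ <;> linarith

theorem exists_sat_sub_of_sat_add (h : (w.add w').sat (r - r')) :
    ∃ d, w.sat (d - r') ∧ w'.sat (r - d) := by
  obtain ⟨s, hs, hs'⟩ := sat_add_iff.1 h
  exact ⟨r' + s, by simpa using hs, by convert hs' using 1; ring⟩

theorem isUpperSet_setOf_sat_sub (w : Weight) (r : ℝ) : IsUpperSet {d | w.sat (r - d)} :=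
  fun _ _ hd h => h.of_le (by linarith)

theorem isLowerSet_setOf_sat_sub (w : Weight) (r : ℝ) : IsLowerSet {d | w.sat (d - r)} :=
  fun _ _ hd h => h.of_le (by linarith)

theorem sat_add_assoc_of_le {w₁ w₂ : Weight} (h : (w₁.add w₂).sat t) (hle : w₁.le (w.add w')) :
    (w.add (w'.add w₂)).sat t := by
  obtain ⟨s, hs, hs₂⟩ := sat_add_iff.1 h
  obtain ⟨s', hs', hs''⟩ := sat_add_iff.1 (hs.mono hle)
  exact sat_add_iff.2 ⟨s', hs', sat_add_iff.2 ⟨_, hs'', by convert hs₂ using 1; ring⟩⟩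

theorem not_forall_le (w : Weight) : ¬ ∀ w', w.le w' := by
  intro h
  rcases w with ⟨b, _ | c⟩
  · simpa [le, lt, ovLt, wle] using h (wle 0)
  · have := h (wlt (c - 1))
    simp [le, lt, ovLt, wlt] at this
    omega

theorem sat_add_wlt_neg_iff {n : ℤ} :
    (w.add (wlt (-n))).sat (-r) ↔ ∀ c, w.val = some c → (n : ℝ) < r + c := by
  rcases w with ⟨_ | _, _ | c⟩ <;> simp [add, ovAdd, wlt, sat]

theorem lt_of_gtLB {n : ℕ} {c : ℤ} (h : gtLB w n) (hc : w.val = some c) : (n : ℤ) < c := by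
  simpa [hc, ovLt] using h n rfl

theorem sat_of_gtLB {n : ℕ} (h : gtLB w n) (ht : t ≤ n) : w.sat t := by
  rcases w with ⟨_ | _, _ | c⟩ <;> simp only [sat]
  all_goals
    have : (n : ℝ) < c := by exact_mod_cast lt_of_gtLB h rfl
    simp only [if_true, Bool.false_eq_true, if_false]
    linarith

end Weight

section Canonical

variable {X : Type*} {G : DGraph X} {Z : Set (Val X)}

@[simp] theorem extV_none (v : Val X) : extV v none = 0 := rfl

@[simp] theorem extV_some (v : Val X) (x : X) : extV v (some x) = v x := rfl

theorem extV_nonneg {v : Val X} (hv : Nonneg v) : ∀ a, 0 ≤ extV v a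
  | none => le_rfl
  | some x => hv x

theorem IsCanonGraph.triangle (hG : IsCanonGraph G Z) (a b c : Vtx X) :
    (G a c).le ((G a b).add (G b c)) := by
  refine hG.2 _ _ _ fun z hz => ?_
  rw [← hG.1] at hz
  simpa using Weight.sat_add (hz.2 a b) (hz.2 b c)

theorem IsCanonGraph.nonempty (hG : IsCanonGraph G Z) : Z.Nonempty := by
  by_contra hZ
  exact (G none none).not_forall_le fun w =>
    hG.2 _ _ w (by simp [Bounds, Set.not_nonempty_iff_eq_empty.1 hZ])

theorem IsCanonGraph.sat_self (hG : IsCanonGraph G Z) (a : Vtx X) : (G a a).sat 0 := by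
  obtain ⟨z, hz⟩ := hG.nonempty
  rw [← hG.1] at hz
  simpa using hz.2 a a

end Canonical

theorem wltNeg_coe (n : ℕ) : wltNeg n = wlt (-n) := rfl

theorem extraLU_some_right {X : Type*} (L U : X → WithBot ℕ) (G : DGraph X) (a : Vtx X)
    (y : X) :
    extraLU L U G a (some y) = G a (some y) ∨ gtLB (G a (some y)) (L y) ∨
      negGtLB (G (some y) none) (L y) ∨ ∃ x ∈ a, negGtLB (G (some x) none) (U x) := by
  rcases a with _ | x <;> simp only [extraLU] <;> split_ifs with h <;> simp_all

section Extrapolation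

variable {X : Type*} {α : X → ℕ} {G : DGraph X} {Z : Set (Val X)} {v : Val X}

theorem not_negGtLB_of_mem_sem_extraLU
    (hv : v ∈ sem (extraLU (fun x => (α x : WithBot ℕ)) (fun x => (α x : WithBot ℕ)) G))
    {x : X} (hx : v x ≤ α x) : ¬ negGtLB (G (some x) none) (α x) := by
  intro h
  have := hv.2 (some x) none
  simp only [extraLU, if_pos h, wltNeg_coe, Weight.sat_wlt, extV_none, extV_some] at this
  push_cast at this
  linarith

theorem sat_of_mem_sem_extraLU
    (hv : v ∈ sem (extraLU (fun x => (α x : WithBot ℕ)) (fun x => (α x : WithBot ℕ)) G))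
    (hG : IsCanonGraph G Z) {a b : Vtx X}
    (ha : ∀ x ∈ a, v x ≤ α x) (hb : ∀ x ∈ b, v x ≤ α x) :
    (G a b).sat (extV v b - extV v a) := by
  rcases b with _ | y
  · rcases a with _ | x
    · simpa using hG.sat_self none
    · simpa [extraLU, not_negGtLB_of_mem_sem_extraLU hv (ha x rfl)] using hv.2 (some x) none
  · rcases extraLU_some_right _ _ G a y with heq | hgt | hneg | ⟨x, hx, hneg⟩
    · exact heq ▸ hv.2 a (some y)
    · refine Weight.sat_of_gtLB hgt ?_
      have := extV_nonneg hv.1 a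
      have := hb y rfl
      rw [extV_some]
      linarith
    · exact absurd hneg (not_negGtLB_of_mem_sem_extraLU hv (hb y rfl))
    · exact absurd hneg (not_negGtLB_of_mem_sem_extraLU hv (ha x hx))

theorem lift_of_mem_sem_extraLU
    (hv : v ∈ sem (extraLU (fun x => (α x : WithBot ℕ)) (fun x => (α x : WithBot ℕ)) G))
    (hG : IsCanonGraph G Z) {a : Vtx X} {y : X}
    (ha : ∀ x ∈ a, v x ≤ α x) (hy : α y < v y) :
    ((G a (some y)).add (wlt (-(α y : ℤ)))).sat (-extV v a) := by
  rw [Weight.sat_add_wlt_neg_iff]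
  intro c hc
  have hva := extV_nonneg hv.1 a
  rcases extraLU_some_right _ _ G a y with heq | hgt | ⟨c', hc', hlt⟩ | ⟨x, hx, hneg⟩
  · have := Weight.le_of_sat hc (heq ▸ hv.2 a (some y))
    rw [extV_some] at this
    push_cast
    linarith
  · have : (α y : ℝ) < c := by exact_mod_cast Weight.lt_of_gtLB hgt hc
    push_cast
    linarith
  · have h0 := sat_of_mem_sem_extraLU hv hG ha (b := none) (by simp)
    rw [extV_none] at h0
    obtain ⟨s, hs, hs'⟩ := Weight.sat_add_iff.1 (h0.mono (hG.triangle a (some y) none))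
    have := Weight.le_of_sat hc hs
    have := Weight.le_of_sat hc' hs'
    have : (c' : ℝ) < -(α y : ℤ) := by exact_mod_cast hlt _ rfl
    push_cast at *
    linarith
  · exact absurd hneg (not_negGtLB_of_mem_sem_extraLU hv (ha x hx))

end Extrapolation

theorem extV_update_of_not_mem {X : Type*} (u : Val X) {y : X} (d : ℝ) {a : Vtx X}
    (h : y ∉ a) :
    extV (Function.update u y d) a = extV u a := by
  rcases a with _ | x
  · rfl
  · have hxy : x ≠ y := fun hxy => h (by rw [hxy]; rfl)
    exact Function.update_of_ne hxy d u

section PartialSol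

variable {X : Type*} (α : X → ℕ) (G : DGraph X)

/-- The invariant of the clock-by-clock construction, `F` being the clocks still to be assigned.
`lift` is the constraint of the path `a → z → x₀` whose last edge is `(<, -α z)`: it leaves room
to give `z` a value above `α z`. -/
structure PartialSol (F : Finset X) (u : Val X) : Prop where
  sat : ∀ a b : Vtx X, (∀ x ∈ a, x ∉ F) → (∀ x ∈ b, x ∉ F) →
    (G a b).sat (extV u b - extV u a)
  lift : ∀ a : Vtx X, (∀ x ∈ a, x ∉ F) → ∀ z ∈ F,
    ((G a (some z)).add (wlt (-(α z : ℤ)))).sat (-extV u a)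

variable {α G} {Z : Set (Val X)} {F : Finset X} {u : Val X} {y : X}

theorem PartialSol.exists_value [Finite X] (hG : IsCanonGraph G Z)
    (hsol : PartialSol α G (insert y F) u) :
    ∃ d : ℝ, (α y : ℝ) < d ∧
      (∀ a, (∀ x ∈ a, x ∉ insert y F) → (G (some y) a).sat (extV u a - d)) ∧
      (∀ a, (∀ x ∈ a, x ∉ insert y F) → (G a (some y)).sat (d - extV u a)) ∧
      ∀ z ∈ F, ((G (some y) (some z)).add (wlt (-(α z : ℤ)))).sat (0 - d) := by
  set fixed := {a : Vtx X | ∀ x ∈ a, x ∉ insert y F}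
  set above := fun a => {d : ℝ | (G (some y) a).sat (extV u a - d)}
  set below := fun a => {d : ℝ | (G a (some y)).sat (d - extV u a)}
  set lift := fun z => {d : ℝ | ((G (some y) (some z)).add (wlt (-(α z : ℤ)))).sat (0 - d)}
  set 𝒰 := above '' fixed ∪ lift '' F ∪ {Set.Ioi (α y : ℝ)}
  set 𝒟 := below '' fixed
  have hU : ∀ U ∈ 𝒰, IsUpperSet U := by
    rintro U ((⟨a, -, rfl⟩ | ⟨z, -, rfl⟩) | rfl)
    · exact Weight.isUpperSet_setOf_sat_sub _ _
    · exact Weight.isUpperSet_setOf_sat_sub _ _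
    · exact isUpperSet_Ioi _
  have hD : ∀ D ∈ 𝒟, IsLowerSet D := by
    rintro D ⟨a, -, rfl⟩
    exact Weight.isLowerSet_setOf_sat_sub _ _
  have hmeet : ∀ U ∈ 𝒰, ∀ D ∈ 𝒟, (U ∩ D).Nonempty := by
    rintro U ((⟨a', ha', rfl⟩ | ⟨z, hz, rfl⟩) | rfl) D ⟨a, ha, rfl⟩
    · obtain ⟨d, h, h'⟩ := Weight.exists_sat_sub_of_sat_add
        ((hsol.sat a a' ha ha').mono (hG.triangle a (some y) a'))
      exact ⟨d, h', h⟩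
    · obtain ⟨d, h, h'⟩ := Weight.exists_sat_sub_of_sat_add (r := 0)
        (Weight.sat_add_assoc_of_le (by simpa using hsol.lift a ha z (Finset.mem_insert_of_mem hz))
          (hG.triangle a (some y) (some z)))
      exact ⟨d, h', h⟩
    · obtain ⟨d, h, h'⟩ := Weight.exists_sat_sub_of_sat_add (r := 0)
        (by simpa using hsol.lift a ha y (Finset.mem_insert_self y F))
      exact ⟨d, by simpa using h', h⟩
  obtain ⟨d, hdU, hdD⟩ := sInter_inter_sInter_nonempty (Set.toFinite 𝒰) (Set.toFinite 𝒟)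
    ⟨_, Or.inr rfl⟩ ⟨_, none, by simp [fixed], rfl⟩ hU hD hmeet
  exact ⟨d, hdU _ (Or.inr rfl), fun a ha => hdU _ (Or.inl (Or.inl ⟨a, ha, rfl⟩)),
    fun a ha => hdD _ ⟨a, ha, rfl⟩, fun z hz => hdU _ (Or.inl (Or.inr ⟨z, hz, rfl⟩))⟩

theorem PartialSol.update (hG : IsCanonGraph G Z) (hsol : PartialSol α G (insert y F) u)
    (hy : y ∉ F) {d : ℝ}
    (habove : ∀ a, (∀ x ∈ a, x ∉ insert y F) → (G (some y) a).sat (extV u a - d))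
    (hbelow : ∀ a, (∀ x ∈ a, x ∉ insert y F) → (G a (some y)).sat (d - extV u a))
    (hlift : ∀ z ∈ F, ((G (some y) (some z)).add (wlt (-(α z : ℤ)))).sat (0 - d)) :
    PartialSol α G F (Function.update u y d) := by
  have hcases : ∀ a : Vtx X, (∀ x ∈ a, x ∉ F) → (∀ x ∈ a, x ∉ insert y F) ∨ a = some y := by
    intro a ha
    refine or_iff_not_imp_right.2 fun hay x hx hxF => ?_
    rcases Finset.mem_insert.1 hxF with rfl | hxF
    · exact hay (Option.mem_def.1 hx)
    · exact ha x hx hxF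
  have hold : ∀ a : Vtx X, (∀ x ∈ a, x ∉ insert y F) →
      extV (Function.update u y d) a = extV u a :=
    fun a ha => extV_update_of_not_mem u d fun hy => ha y hy (Finset.mem_insert_self y F)
  have hnew : extV (Function.update u y d) (some y) = d := by simp
  constructor
  · intro a b ha hb
    rcases hcases a ha with ha | rfl <;> rcases hcases b hb with hb | rfl
    · rw [hold a ha, hold b hb]
      exact hsol.sat a b ha hb
    · rw [hold a ha, hnew]
      exact hbelow a ha
    · rw [hold b hb, hnew]
      exact habove b hb
    · simpa using hG.sat_self (some y)
  · intro a ha z hz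
    rcases hcases a ha with ha | rfl
    · rw [hold a ha]
      exact hsol.lift a ha z (Finset.mem_insert_of_mem hz)
    · simpa [hnew] using hlift z hz

theorem PartialSol.exists_extension [Finite X] (hG : IsCanonGraph G Z)
    (hsol : PartialSol α G F u) :
    ∃ u' : Val X, (∀ x ∉ F, u' x = u x) ∧ (∀ z ∈ F, (α z : ℝ) < u' z) ∧
      ∀ a b, (G a b).sat (extV u' b - extV u' a) := by
  induction F using Finset.induction_on generalizing u with
  | empty => exact ⟨u, fun _ _ => rfl, by simp, fun a b => hsol.sat a b (by simp) (by simp)⟩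
  | insert y F hy ih =>
    obtain ⟨d, hd, habove, hbelow, hlift⟩ := hsol.exists_value hG
    obtain ⟨u', hout, hin, hsat⟩ := ih (hsol.update hG hy habove hbelow hlift)
    refine ⟨u', fun x hx => ?_, fun z hz => ?_, hsat⟩
    · rw [Finset.mem_insert, not_or] at hx
      rw [hout x hx.2, Function.update_of_ne hx.1]
    · rcases Finset.mem_insert.1 hz with rfl | hz
      · rwa [hout z hy, Function.update_self]
      · exact hin z hz

end PartialSol

theorem partialSol_of_mem_sem_extraLU {X : Type*} [Fintype X] {α : X → ℕ} {G : DGraph X}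
    {Z : Set (Val X)} {v : Val X}
    (hv : v ∈ sem (extraLU (fun x => (α x : WithBot ℕ)) (fun x => (α x : WithBot ℕ)) G))
    (hG : IsCanonGraph G Z) :
    PartialSol α G (Finset.univ.filter fun x => (α x : ℝ) < v x) v := by
  have hbdd : ∀ a : Vtx X, (∀ x ∈ a, x ∉ Finset.univ.filter fun x => (α x : ℝ) < v x) →
      ∀ x ∈ a, v x ≤ α x := by
    simp
  refine ⟨fun a b ha hb => sat_of_mem_sem_extraLU hv hG (hbdd a ha) (hbdd b hb),
    fun a ha z hz => lift_of_mem_sem_extraLU hv hG (hbdd a ha) ?_⟩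
  simpa using hz

theorem exists_mem_sem_of_mem_sem_extraLU {X : Type*} [Fintype X] {α : X → ℕ} {G : DGraph X}
    {Z : Set (Val X)} {v : Val X}
    (hv : v ∈ sem (extraLU (fun x => (α x : WithBot ℕ)) (fun x => (α x : WithBot ℕ)) G))
    (hG : IsCanonGraph G Z) :
    ∃ u ∈ sem G, (∀ x, v x ≤ α x → u x = v x) ∧
      ∀ x, (α x : ℝ) < v x → (α x : ℝ) < u x := by
  obtain ⟨u, hout, hin, hsat⟩ := (partialSol_of_mem_sem_extraLU hv hG).exists_extension hG
  have hbdd : ∀ x, v x ≤ α x → u x = v x := fun x hx => hout x (by simpa using hx)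
  have hunb : ∀ x, (α x : ℝ) < v x → (α x : ℝ) < u x := fun x hx => hin x (by simpa using hx)
  refine ⟨u, ⟨fun x => ?_, hsat⟩, hbdd, hunb⟩
  rcases le_or_gt (v x) (α x) with hx | hx
  · exact hbdd x hx ▸ hv.1 x
  · exact (Nat.cast_nonneg _).trans (hunb x hx).le

section Regions

variable {X : Type*} {α : X → ℕ} {u v : Val X}

theorem regEq_of_eq_of_lt (hbdd : ∀ x, v x ≤ α x → u x = v x)
    (hunb : ∀ x, (α x : ℝ) < v x → (α x : ℝ) < u x) : regEq α v u := by
  refine ⟨fun x => ?_, fun x y hx hy => by rw [hbdd x hx, hbdd y hy]⟩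
  rcases le_or_gt (v x) (α x) with hx | hx
  · exact Or.inr ⟨by rw [hbdd x hx], by rw [hbdd x hx]⟩
  · exact Or.inl ⟨hx, hunb x hx⟩

theorem mem_closure_of_regEq {S : Set (Val X)} (hv : Nonneg v) (hu : u ∈ S) (hu' : Nonneg u)
    (h : regEq α v u) : v ∈ Closure α S :=
  ⟨_, ⟨⟨v, hv, rfl⟩, u, ⟨hu', h⟩, hu⟩,
    hv, regEq_of_eq_of_lt (fun _ _ => rfl) fun _ hx => hx⟩

end Regions

theorem stmt15_general {X : Type*} [Fintype X] (α : X → ℕ)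
    (Z : Set (Val X)) (G : DGraph X) (hG : IsCanonGraph G Z) :
    sem (extraLU (fun x => (α x : WithBot ℕ)) (fun x => (α x : WithBot ℕ)) G)
      ⊆ Closure α Z := by
  intro v hv
  obtain ⟨u, hu, hbdd, hunb⟩ := exists_mem_sem_of_mem_sem_extraLU hv hG
  exact mem_closure_of_regEq hv.1 (hG.1 ▸ hu) hu.1 (regEq_of_eq_of_lt hbdd hunb)

/-- For every zone `Z` (with canonical distance graph `G`) and bound
function `α`, taking `L = U = α`: `Extra⁺_{LU}(Z) ⊆ Closure_α(Z)`. -/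
theorem stmt15 {X : Type*} [Fintype X] (α : X → ℕ)
    (Z : Set (Val X)) (hZ : IsZone Z) (G : DGraph X) (hG : IsCanonGraph G Z) :
    sem (extraLU (fun x => (α x : WithBot ℕ)) (fun x => (α x : WithBot ℕ)) G)
      ⊆ Closure α Z :=
  stmt15_general α Z G hG

end TAform

end
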